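/- Let A₁, A₂, B₁, B₂ be n×n Hermitian positive semidefinite complex matrices with trace 1, let λ > 0, let x₁, x₂, y₁, y₂ ∈ ℝ with (x₂ − x₁)(y₁ − y₂) > 2λ, and let m₁₁ > 0, m₂₂ ≥ m₁₁, m₁₂ ≥ 0, m₂₁ ≥ 0. Then Σ_{i,j∈{1,2}} m_{ij}((x_i − y_j)² + λ‖A_i − B_j‖_F²) > (m₁₁ + m₁₂)((x₁ − y₂)² + λ‖A₁ − B₂‖_F²) + (m₁₁ + m₂₁)((x₂ − y₁)² + λ‖A₂ − B₁‖_F²) + (m₂₂ − m₁₁)((x₂ − y₂)² + λ‖A₂ − B₂‖_F²). In other words, rearranging the mass strictly reduces the transportation cost when the support violates 2λ-monotonicity. -/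

import Mathlib

/-!
Replacing the plan changes the cost by `m₁₁ (c₁₂ + c₂₁ - c₁₁ - c₂₂)`, where `c_ij` is the cost
at `(x_i, y_j)`, so it suffices that `c₁₂ + c₂₁ < c₁₁ + c₂₂`. The positional part of
`c₁₁ + c₂₂ - c₁₂ - c₂₁` is `2 (x₂ - x₁)(y₁ - y₂) > 4λ`, and the orientation part is at least `-4λ`
because unit-trace positive semidefinite matrices are at squared Frobenius distance at most `2`:
`‖A‖_F² ≤ (tr A)² = 1` by the `2 × 2` principal minors, and `Re ⟨A, B⟩_F ≥ 0` by the Schur product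
theorem.
-/

open Matrix ComplexOrder

/-- The squared Frobenius norm of a complex matrix. -/
noncomputable def frobSq {n : ℕ} (M : Matrix (Fin n) (Fin n) ℂ) : ℝ :=
  ∑ i, ∑ j, ‖M i j‖ ^ 2

namespace Matrix.PosSemidef

variable {ι : Type*} {A B : Matrix ι ι ℂ}

lemma norm_apply_sq_le (hA : A.PosSemidef) (i j : ι) :
    ‖A i j‖ ^ 2 ≤ (A i i).re * (A j j).re := by
  have hdet := (hA.submatrix ![i, j]).det_nonneg
  have hji : A j i = star (A i j) := (hA.isHermitian.apply j i).symm
  rw [det_fin_two] at hdet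
  simp only [submatrix_apply, Matrix.cons_val_zero, Matrix.cons_val_one, hji] at hdet
  have hdet_re := (Complex.nonneg_iff.mp hdet).1
  rw [Complex.star_def, Complex.mul_conj, Complex.normSq_eq_norm_sq] at hdet_re
  have hi : (A i i).im = 0 := (Complex.nonneg_iff.mp hA.diag_nonneg).2.symm
  simp only [Complex.sub_re, Complex.mul_re, Complex.ofReal_re, hi, zero_mul, sub_zero] at hdet_re
  linarith

lemma sum_re_mul_star_nonneg [Fintype ι] (hA : A.PosSemidef) (hB : B.PosSemidef) :
    0 ≤ ∑ i, ∑ j, (A i j * star (B i j)).re := by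
  have hBt : ∀ i j, Bᵀ i j = star (B i j) := fun i j => (hB.isHermitian.apply j i).symm
  -- the sum of all entries of the PSD Hadamard product `A ⊙ Bᵀ`
  have h := (hA.hadamard hB.transpose).dotProduct_mulVec_nonneg (fun _ => 1)
  simp only [dotProduct, mulVec, hadamard_apply, hBt, Pi.star_apply, star_one, one_mul,
    mul_one] at h
  simpa [Complex.re_sum] using (Complex.nonneg_iff.mp h).1

end Matrix.PosSemidef

section frobSq

variable {n : ℕ} {A B : Matrix (Fin n) (Fin n) ℂ}

lemma frobSq_nonneg (M : Matrix (Fin n) (Fin n) ℂ) : 0 ≤ frobSq M := by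
  unfold frobSq; positivity

lemma frobSq_sub (A B : Matrix (Fin n) (Fin n) ℂ) :
    frobSq (A - B) = frobSq A + frobSq B - 2 * ∑ i, ∑ j, (A i j * star (B i j)).re := by
  have hentry : ∀ i j, ‖(A - B) i j‖ ^ 2
      = ‖A i j‖ ^ 2 + ‖B i j‖ ^ 2 - 2 * (A i j * star (B i j)).re := fun i j => by
    simpa only [Matrix.sub_apply, Complex.star_def, ← Complex.sq_norm] using
      Complex.normSq_sub (A i j) (B i j)
  simp only [frobSq, hentry, Finset.sum_sub_distrib, Finset.sum_add_distrib, Finset.mul_sum]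

lemma Matrix.PosSemidef.frobSq_le_sq_re_trace (hA : A.PosSemidef) :
    frobSq A ≤ A.trace.re ^ 2 :=
  calc frobSq A ≤ ∑ i, ∑ j, (A i i).re * (A j j).re :=
        Finset.sum_le_sum fun i _ => Finset.sum_le_sum fun j _ => hA.norm_apply_sq_le i j
    _ = A.trace.re ^ 2 := by
        simp only [trace, diag, Complex.re_sum, sq, Finset.sum_mul_sum]

lemma frobSq_sub_le_two (hA : A.PosSemidef) (hB : B.PosSemidef)
    (hAtr : A.trace = 1) (hBtr : B.trace = 1) : frobSq (A - B) ≤ 2 := by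
  have hA1 := hA.frobSq_le_sq_re_trace
  have hB1 := hB.frobSq_le_sq_re_trace
  rw [hAtr, Complex.one_re, one_pow] at hA1
  rw [hBtr, Complex.one_re, one_pow] at hB1
  linarith [frobSq_sub A B, hA.sum_re_mul_star_nonneg hB]

end frobSq

lemma cross_costs_lt {lam x₁ x₂ y₁ y₂ d₁₁ d₁₂ d₂₁ d₂₂ : ℝ} (hlam : 0 ≤ lam)
    (h : (x₂ - x₁) * (y₁ - y₂) > 2 * lam) (h₁₁ : 0 ≤ d₁₁) (h₂₂ : 0 ≤ d₂₂)
    (h₁₂ : d₁₂ ≤ 2) (h₂₁ : d₂₁ ≤ 2) :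
    (x₁ - y₂) ^ 2 + lam * d₁₂ + ((x₂ - y₁) ^ 2 + lam * d₂₁) <
      (x₁ - y₁) ^ 2 + lam * d₁₁ + ((x₂ - y₂) ^ 2 + lam * d₂₂) := by
  have hsq : (x₁ - y₁) ^ 2 + (x₂ - y₂) ^ 2 - (x₁ - y₂) ^ 2 - (x₂ - y₁) ^ 2
      = 2 * ((x₂ - x₁) * (y₁ - y₂)) := by ring
  linarith [mul_le_mul_of_nonneg_left h₁₂ hlam, mul_le_mul_of_nonneg_left h₂₁ hlam,
    mul_nonneg hlam h₁₁, mul_nonneg hlam h₂₂]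

lemma rearranged_cost_lt {m₁₁ m₁₂ m₂₁ m₂₂ c₁₁ c₁₂ c₂₁ c₂₂ : ℝ} (hm₁₁ : 0 < m₁₁)
    (hc : c₁₂ + c₂₁ < c₁₁ + c₂₂) :
    (m₁₁ + m₁₂) * c₁₂ + (m₁₁ + m₂₁) * c₂₁ + (m₂₂ - m₁₁) * c₂₂ <
      m₁₁ * c₁₁ + m₁₂ * c₁₂ + m₂₁ * c₂₁ + m₂₂ * c₂₂ := by
  linarith [mul_lt_mul_of_pos_left hc hm₁₁]

theorem rearrangement_reduces_cost_general {n : ℕ}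
    (A₁ A₂ B₁ B₂ : Matrix (Fin n) (Fin n) ℂ)
    (hA₁ : A₁.PosSemidef) (hA₂ : A₂.PosSemidef)
    (hB₁ : B₁.PosSemidef) (hB₂ : B₂.PosSemidef)
    (hA₁tr : A₁.trace = 1) (hA₂tr : A₂.trace = 1)
    (hB₁tr : B₁.trace = 1) (hB₂tr : B₂.trace = 1)
    (lam : ℝ) (hlam : 0 < lam)
    (x₁ x₂ y₁ y₂ : ℝ) (h : (x₂ - x₁) * (y₁ - y₂) > 2 * lam)
    (m₁₁ m₁₂ m₂₁ m₂₂ : ℝ)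
    (hm₁₁ : 0 < m₁₁) :
    m₁₁ * ((x₁ - y₁) ^ 2 + lam * frobSq (A₁ - B₁)) +
      m₁₂ * ((x₁ - y₂) ^ 2 + lam * frobSq (A₁ - B₂)) +
      m₂₁ * ((x₂ - y₁) ^ 2 + lam * frobSq (A₂ - B₁)) +
      m₂₂ * ((x₂ - y₂) ^ 2 + lam * frobSq (A₂ - B₂)) >
    (m₁₁ + m₁₂) * ((x₁ - y₂) ^ 2 + lam * frobSq (A₁ - B₂)) +
      (m₁₁ + m₂₁) * ((x₂ - y₁) ^ 2 + lam * frobSq (A₂ - B₁)) +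
      (m₂₂ - m₁₁) * ((x₂ - y₂) ^ 2 + lam * frobSq (A₂ - B₂)) :=
  rearranged_cost_lt hm₁₁ <| cross_costs_lt hlam.le h (frobSq_nonneg _) (frobSq_nonneg _)
    (frobSq_sub_le_two hA₁ hB₂ hA₁tr hB₂tr) (frobSq_sub_le_two hA₂ hB₁ hA₂tr hB₁tr)

theorem rearrangement_reduces_cost {n : ℕ}
    (A₁ A₂ B₁ B₂ : Matrix (Fin n) (Fin n) ℂ)
    (hA₁ : A₁.PosSemidef) (hA₂ : A₂.PosSemidef)
    (hB₁ : B₁.PosSemidef) (hB₂ : B₂.PosSemidef)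
    (hA₁tr : A₁.trace = 1) (hA₂tr : A₂.trace = 1)
    (hB₁tr : B₁.trace = 1) (hB₂tr : B₂.trace = 1)
    (lam : ℝ) (hlam : 0 < lam)
    (x₁ x₂ y₁ y₂ : ℝ) (h : (x₂ - x₁) * (y₁ - y₂) > 2 * lam)
    (m₁₁ m₁₂ m₂₁ m₂₂ : ℝ)
    (hm₁₁ : 0 < m₁₁) (hm₂₂ : m₁₁ ≤ m₂₂) (hm₁₂ : 0 ≤ m₁₂) (hm₂₁ : 0 ≤ m₂₁) :
    m₁₁ * ((x₁ - y₁) ^ 2 + lam * frobSq (A₁ - B₁)) +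
      m₁₂ * ((x₁ - y₂) ^ 2 + lam * frobSq (A₁ - B₂)) +
      m₂₁ * ((x₂ - y₁) ^ 2 + lam * frobSq (A₂ - B₁)) +
      m₂₂ * ((x₂ - y₂) ^ 2 + lam * frobSq (A₂ - B₂)) >
    (m₁₁ + m₁₂) * ((x₁ - y₂) ^ 2 + lam * frobSq (A₁ - B₂)) +
      (m₁₁ + m₂₁) * ((x₂ - y₁) ^ 2 + lam * frobSq (A₂ - B₁)) +
      (m₂₂ - m₁₁) * ((x₂ - y₂) ^ 2 + lam * frobSq (A₂ - B₂)) :=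
  rearrangement_reduces_cost_general A₁ A₂ B₁ B₂ hA₁ hA₂ hB₁ hB₂ hA₁tr hA₂tr hB₁tr hB₂tr lam hlam x₁
    x₂ y₁ y₂ h m₁₁ m₁₂ m₂₁ m₂₂ hm₁₁
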